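/- (Regularity of the solution at each fixed time.) For each fixed t > 0: (i) u⁺(x,t) ≤ u⁻(x,t) for every x ∈ ℝ, and the set of jump points {x ∈ ℝ : u⁺(x,t) < u⁻(x,t)} is at most countable; (ii) the function x ↦ f'(u⁺(x,t)) has locally bounded variation on ℝ. -/

import Mathlib

open MeasureTheory Filter Set

noncomputable def eFun (f φ : ℝ → ℝ) (u x t : ℝ) : ℝ :=
  t * (∫ s in (0:ℝ)..u, deriv (deriv f) s * (φ (x - t * deriv f s) - s))

def maxSet (f φ : ℝ → ℝ) (x t : ℝ) : Set ℝ :=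
  {w : ℝ | ∀ v : ℝ, eFun f φ v x t ≤ eFun f φ w x t}

noncomputable def uPlus (f φ : ℝ → ℝ) (x t : ℝ) : ℝ := sInf (maxSet f φ x t)

noncomputable def uMinus (f φ : ℝ → ℝ) (x t : ℝ) : ℝ := sSup (maxSet f φ x t)

/-!
Substituting `y = x - t f'(s)` gives
`E(u; x, t) = -∫_{x - t f'(0)}^{x - t f'(u)} φ - t (f*(f'(u)) - f*(f'(0)))`,
a Hopf–Lax functional of the characteristic foot `y = x - t f'(u)`. Strict convexity of the
Legendre transform `f*` makes the feet of maximizers nondecreasing in `x`: exchanging the feet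
of two maximizers with crossing feet would strictly increase the sum of the two values. Hence the
intervals `(x - t f'(u⁻), x - t f'(u⁺))` of distinct jump points are disjoint, so there are
countably many, and `f'(u⁺(x, t)) = (x - y⁺(x)) / t` is a difference of monotone functions.
-/

section Variation

variable {α E : Type*} [LinearOrder α] [SeminormedAddCommGroup E]

theorem eVariationOn.sub_le (f g : α → E) (s : Set α) :
    eVariationOn (fun x ↦ f x - g x) s ≤ eVariationOn f s + eVariationOn g s := by
  refine iSup_le fun ⟨n, u, hu, us⟩ ↦ ?_
  calc ∑ i ∈ Finset.range n, edist (f (u (i + 1)) - g (u (i + 1))) (f (u i) - g (u i))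
      ≤ ∑ i ∈ Finset.range n,
          (edist (f (u (i + 1))) (f (u i)) + edist (g (u (i + 1))) (g (u i))) := by
        gcongr with i
        simpa only [sub_eq_add_neg, edist_neg_neg] using
          edist_add_add_le (f (u (i + 1))) (-g (u (i + 1))) (f (u i)) (-g (u i))
    _ ≤ eVariationOn f s + eVariationOn g s := by
        rw [Finset.sum_add_distrib]
        exact add_le_add (eVariationOn.sum_le hu us) (eVariationOn.sum_le hu us)

theorem LocallyBoundedVariationOn.sub {f g : α → E} {s : Set α}
    (hf : LocallyBoundedVariationOn f s) (hg : LocallyBoundedVariationOn g s) :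
    LocallyBoundedVariationOn (fun x ↦ f x - g x) s := fun a b ha hb ↦
  ne_top_of_le_ne_top (ENNReal.add_ne_top.2 ⟨hf a b ha hb, hg a b ha hb⟩)
    (eVariationOn.sub_le f g _)

theorem locallyBoundedVariationOn_of_monotone_sub_mul {g : ℝ → ℝ} {t : ℝ} (ht : 0 < t)
    (hg : Monotone fun x ↦ x - t * g x) : LocallyBoundedVariationOn g univ := by
  have hid : Monotone fun x : ℝ ↦ x / t := fun _ _ hx ↦ div_le_div_of_nonneg_right hx ht.le
  have hsplit : g = fun x ↦ x / t - (x - t * g x) / t := by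
    ext x
    field_simp
    ring
  rw [hsplit]
  exact (hid.monotoneOn univ).locallyBoundedVariationOn.sub
    ((hg.div_const ht.le).monotoneOn univ).locallyBoundedVariationOn

end Variation

/-- Each `x` with `a x < b x` owns the open interval `(a x, b x)`, and these are disjoint. -/
theorem countable_setOf_lt_of_forall_lt_le {ι : Type*} [LinearOrder ι] {a b : ι → ℝ}
    (h : ∀ x₁ x₂, x₁ < x₂ → b x₁ ≤ a x₂) : {x | a x < b x}.Countable := by
  have hdisj : ∀ x₁ x₂, x₁ < x₂ → Disjoint (Ioo (a x₁) (b x₁)) (Ioo (a x₂) (b x₂)) :=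
    fun x₁ x₂ hx ↦ disjoint_left.2 fun _ hy₁ hy₂ ↦ (hy₁.2.trans_le (h x₁ x₂ hx)).not_gt hy₂.1
  refine PairwiseDisjoint.countable_of_isOpen (s := fun x ↦ Ioo (a x) (b x)) ?_
    (fun _ _ ↦ isOpen_Ioo) (fun _ hx ↦ nonempty_Ioo.2 hx)
  intro x₁ _ x₂ _ hne
  rcases hne.lt_or_gt with hlt | hlt
  exacts [hdisj x₁ x₂ hlt, (hdisj x₂ x₁ hlt).symm]

theorem strictMono_of_deriv_nonneg_of_volume_zero {g : ℝ → ℝ} (hg : Differentiable ℝ g)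
    (hnonneg : ∀ x, 0 ≤ deriv g x) (hnull : volume {x | deriv g x = 0} = 0) :
    StrictMono g := by
  have hmono := monotone_of_deriv_nonneg hg hnonneg
  refine fun a b hab ↦ (hmono hab.le).lt_of_ne fun heq ↦ ?_
  have hflat : Ioo a b ⊆ {x | deriv g x = 0} := by
    intro x hx
    have hconst : g =ᶠ[nhds x] fun _ ↦ g a := by
      filter_upwards [Ioo_mem_nhds hx.1 hx.2] with y hy
      exact le_antisymm (heq ▸ hmono hy.2.le) (hmono hy.1.le)
    simpa using hconst.deriv_eq
  have := measure_mono_null hflat hnull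
  rw [Real.volume_Ioo, ENNReal.ofReal_eq_zero] at this
  linarith

/-- `legendreAt f u = f* (f' u)`, the Legendre transform of `f` at the slope `f' u`. -/
noncomputable def legendreAt (f : ℝ → ℝ) (u : ℝ) : ℝ := u * deriv f u - f u

section Legendre

variable {f : ℝ → ℝ} {a b c d : ℝ}

theorem mul_sub_lt_legendreAt_sub (hf : Differentiable ℝ f) (hmono : StrictMono (deriv f))
    (hab : a < b) : a * (deriv f b - deriv f a) < legendreAt f b - legendreAt f a := by
  obtain ⟨c, hc, hslope⟩ := exists_deriv_eq_slope f hab hf.continuous.continuousOn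
    hf.differentiableOn
  rw [eq_div_iff (sub_pos.2 hab).ne'] at hslope
  unfold legendreAt
  nlinarith [mul_pos (sub_pos.2 hab) (sub_pos.2 (hmono hc.2))]

theorem legendreAt_sub_lt_mul_sub (hf : Differentiable ℝ f) (hmono : StrictMono (deriv f))
    (hab : a < b) : legendreAt f b - legendreAt f a < b * (deriv f b - deriv f a) := by
  obtain ⟨c, hc, hslope⟩ := exists_deriv_eq_slope f hab hf.continuous.continuousOn
    hf.differentiableOn
  rw [eq_div_iff (sub_pos.2 hab).ne'] at hslope
  unfold legendreAt
  nlinarith [mul_pos (sub_pos.2 hab) (sub_pos.2 (hmono hc.1))]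

theorem legendreAt_add_lt_of_le (hf : Differentiable ℝ f) (hmono : StrictMono (deriv f))
    (hac : a < c) (hcd : c ≤ d) (hdb : d < b)
    (hsum : deriv f c + deriv f d = deriv f a + deriv f b) :
    legendreAt f c + legendreAt f d < legendreAt f a + legendreAt f b := by
  have hright := mul_sub_lt_legendreAt_sub hf hmono hdb
  have hleft := legendreAt_sub_lt_mul_sub hf hmono hac
  have hcd' : c * (deriv f c - deriv f a) ≤ d * (deriv f c - deriv f a) :=
    mul_le_mul_of_nonneg_right hcd (sub_nonneg.2 (hmono hac).le)
  rw [show deriv f b - deriv f d = deriv f c - deriv f a by linarith] at hright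
  linarith

/-- Strict convexity of `f*`: pulling two slopes together at a fixed sum lowers `f*`. -/
theorem legendreAt_add_lt (hf : Differentiable ℝ f) (hmono : StrictMono (deriv f))
    (hac : a < c) (had : a < d) (hcb : c < b) (hdb : d < b)
    (hsum : deriv f c + deriv f d = deriv f a + deriv f b) :
    legendreAt f c + legendreAt f d < legendreAt f a + legendreAt f b := by
  rcases le_total c d with hcd | hdc
  · exact legendreAt_add_lt_of_le hf hmono hac hcd hdb hsum
  · rw [add_comm (legendreAt f c)]
    exact legendreAt_add_lt_of_le hf hmono had hdc hcb (by linarith)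

theorem integral_deriv_deriv_mul_id (hf : ContDiff ℝ 2 f) :
    ∫ s in a..b, deriv (deriv f) s * s = legendreAt f b - legendreAt f a := by
  have hf' : ContDiff ℝ 1 (deriv f) := hf.deriv'
  refine intervalIntegral.integral_eq_sub_of_hasDerivAt (fun s _ ↦ ?_)
    (((hf'.continuous_deriv le_rfl).mul continuous_id).intervalIntegrable _ _)
  exact (((hasDerivAt_id' s).mul ((hf'.differentiable one_ne_zero) s).hasDerivAt).sub
    ((hf.differentiable two_ne_zero) s).hasDerivAt).congr_deriv (by ring)

end Legendre

theorem Measurable.intervalIntegrable_of_abs_le {φ : ℝ → ℝ} {M : ℝ} (hφ : Measurable φ)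
    (hM : ∀ x, |φ x| ≤ M) (a b : ℝ) : IntervalIntegrable φ volume a b :=
  (intervalIntegrable_const (c := M)).mono_fun hφ.aestronglyMeasurable
    (ae_of_all _ fun x ↦ by simpa only [Real.norm_eq_abs] using (hM x).trans (le_abs_self M))

section EFun

variable {f φ : ℝ → ℝ} {M t x : ℝ}

theorem eFun_eq (hf : ContDiff ℝ 2 f) (hconv : ∀ u, 0 ≤ deriv (deriv f) u) (hφ : Measurable φ)
    (hM : ∀ x, |φ x| ≤ M) (ht : 0 ≤ t) (u : ℝ) :
    eFun f φ u x t = -(∫ y in (x - t * deriv f 0)..(x - t * deriv f u), φ y)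
      - t * (legendreAt f u - legendreAt f 0) := by
  have hf' : ContDiff ℝ 1 (deriv f) := hf.deriv'
  have hf'' : Continuous (deriv (deriv f)) := hf'.continuous_deriv le_rfl
  set g : ℝ → ℝ := fun s ↦ x - t * deriv f s
  have hg : ∀ s, HasDerivAt g (-(t * deriv (deriv f) s)) s := fun s ↦
    ((((hf'.differentiable one_ne_zero) s).hasDerivAt).const_mul t).const_sub x
  have hsubst : ∫ s in (0 : ℝ)..u, (φ ∘ g) s * -(t * deriv (deriv f) s) = ∫ y in g 0..g u, φ y :=
    intervalIntegral.integral_comp_mul_deriv_of_deriv_nonpos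
      (fun s _ ↦ (hg s).continuousAt.continuousWithinAt) (fun s _ ↦ hg s)
      (fun s _ ↦ neg_nonpos.2 (mul_nonneg ht (hconv s)))
  have hint : IntervalIntegrable (fun s ↦ deriv (deriv f) s * φ (g s)) volume 0 u :=
    ((hφ.comp (continuous_iff_continuousAt.2 fun s ↦ (hg s).continuousAt).measurable
      ).intervalIntegrable_of_abs_le (fun s ↦ hM (g s)) 0 u).continuousOn_mul hf''.continuousOn
  have hid : IntervalIntegrable (fun s ↦ deriv (deriv f) s * s) volume 0 u :=
    (hf''.mul continuous_id).intervalIntegrable _ _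
  have hφpart : t * ∫ s in (0 : ℝ)..u, deriv (deriv f) s * φ (g s) = -∫ y in g 0..g u, φ y := by
    rw [← hsubst, ← intervalIntegral.integral_const_mul, ← intervalIntegral.integral_neg]
    congr 1
    ext s
    simp only [Function.comp]
    ring
  calc eFun f φ u x t
      = t * (∫ s in (0 : ℝ)..u, deriv (deriv f) s * φ (g s))
          - t * ∫ s in (0 : ℝ)..u, deriv (deriv f) s * s := by
        rw [eFun, ← mul_sub, ← intervalIntegral.integral_sub hint hid]
        simp only [mul_sub, g]
    _ = _ := by rw [hφpart, integral_deriv_deriv_mul_id hf]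

theorem eFun_sub_eFun (hf : ContDiff ℝ 2 f) (hconv : ∀ u, 0 ≤ deriv (deriv f) u)
    (hφ : Measurable φ) (hM : ∀ x, |φ x| ≤ M) (ht : 0 ≤ t) (a b : ℝ) :
    eFun f φ b x t - eFun f φ a x t
      = (∫ y in (x - t * deriv f b)..(x - t * deriv f a), φ y)
        - t * (legendreAt f b - legendreAt f a) := by
  have hint := hφ.intervalIntegrable_of_abs_le hM
  rw [eFun_eq hf hconv hφ hM ht, eFun_eq hf hconv hφ hM ht,
    ← intervalIntegral.integral_interval_sub_left (hint (x - t * deriv f 0) (x - t * deriv f a))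
      (hint _ (x - t * deriv f b))]
  ring

theorem continuous_eFun (hf : ContDiff ℝ 2 f) (hconv : ∀ u, 0 ≤ deriv (deriv f) u)
    (hφ : Measurable φ) (hM : ∀ x, |φ x| ≤ M) (ht : 0 ≤ t) :
    Continuous fun u ↦ eFun f φ u x t := by
  have hf' : Continuous (deriv f) := hf.continuous_deriv one_le_two
  have hprim := intervalIntegral.continuous_primitive (hφ.intervalIntegrable_of_abs_le hM)
    (x - t * deriv f 0)
  simp_rw [eFun_eq hf hconv hφ hM ht, legendreAt]
  have hfc := hf.continuous
  fun_prop

theorem eFun_lt_eFun_of_lt (hf : ContDiff ℝ 2 f) (hconv : ∀ u, 0 ≤ deriv (deriv f) u)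
    (hmono : StrictMono (deriv f)) (hφ : Measurable φ) (hM : ∀ x, |φ x| ≤ M) (ht : 0 < t)
    {v : ℝ} (hv : M < v) : eFun f φ v x t < eFun f φ M x t := by
  have hI := intervalIntegral.norm_integral_le_of_norm_le_const (a := x - t * deriv f v)
    (b := x - t * deriv f M) fun y _ ↦ (Real.norm_eq_abs (φ y)).trans_le (hM y)
  rw [Real.norm_eq_abs, show x - t * deriv f M - (x - t * deriv f v)
    = t * (deriv f v - deriv f M) by ring, abs_of_pos (mul_pos ht (sub_pos.2 (hmono hv)))] at hI
  have hℓ := mul_lt_mul_of_pos_left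
    (mul_sub_lt_legendreAt_sub (hf.differentiable two_ne_zero) hmono hv) ht
  rw [← sub_neg, eFun_sub_eFun hf hconv hφ hM ht.le]
  linarith [(abs_le.1 hI).2]

theorem eFun_lt_eFun_of_lt_neg (hf : ContDiff ℝ 2 f) (hconv : ∀ u, 0 ≤ deriv (deriv f) u)
    (hmono : StrictMono (deriv f)) (hφ : Measurable φ) (hM : ∀ x, |φ x| ≤ M) (ht : 0 < t)
    {v : ℝ} (hv : v < -M) : eFun f φ v x t < eFun f φ (-M) x t := by
  have hI := intervalIntegral.norm_integral_le_of_norm_le_const (a := x - t * deriv f (-M))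
    (b := x - t * deriv f v) fun y _ ↦ (Real.norm_eq_abs (φ y)).trans_le (hM y)
  rw [Real.norm_eq_abs, show x - t * deriv f v - (x - t * deriv f (-M))
    = t * (deriv f (-M) - deriv f v) by ring,
    abs_of_pos (mul_pos ht (sub_pos.2 (hmono hv)))] at hI
  have hℓ := mul_lt_mul_of_pos_left
    (legendreAt_sub_lt_mul_sub (hf.differentiable two_ne_zero) hmono hv) ht
  rw [← sub_pos, eFun_sub_eFun hf hconv hφ hM ht.le]
  linarith [(abs_le.1 hI).1]

end EFun

section MaxSet

variable {f φ : ℝ → ℝ} {M t x : ℝ}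

theorem maxSet_subset_Icc (hf : ContDiff ℝ 2 f) (hconv : ∀ u, 0 ≤ deriv (deriv f) u)
    (hmono : StrictMono (deriv f)) (hφ : Measurable φ) (hM : ∀ x, |φ x| ≤ M) (ht : 0 < t) :
    maxSet f φ x t ⊆ Icc (-M) M := by
  intro w hw
  by_contra hout
  rcases not_and_or.1 hout with hlow | hup
  · exact (eFun_lt_eFun_of_lt_neg hf hconv hmono hφ hM ht (not_le.1 hlow)).not_ge (hw _)
  · exact (eFun_lt_eFun_of_lt hf hconv hmono hφ hM ht (not_le.1 hup)).not_ge (hw _)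

theorem isClosed_maxSet (hf : ContDiff ℝ 2 f) (hconv : ∀ u, 0 ≤ deriv (deriv f) u)
    (hφ : Measurable φ) (hM : ∀ x, |φ x| ≤ M) (ht : 0 ≤ t) : IsClosed (maxSet f φ x t) := by
  have hE := continuous_eFun hf hconv hφ hM ht (x := x)
  simpa only [maxSet, ofPred_forall] using
    isClosed_iInter fun v ↦ isClosed_le continuous_const hE

theorem isCompact_maxSet (hf : ContDiff ℝ 2 f) (hconv : ∀ u, 0 ≤ deriv (deriv f) u)
    (hmono : StrictMono (deriv f)) (hφ : Measurable φ) (hM : ∀ x, |φ x| ≤ M) (ht : 0 < t) :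
    IsCompact (maxSet f φ x t) :=
  isCompact_Icc.of_isClosed_subset (isClosed_maxSet hf hconv hφ hM ht.le)
    (maxSet_subset_Icc hf hconv hmono hφ hM ht)

/-- Off `[-M, M]` `eFun` lies below its value at `±M`, so a maximizer over the compact
interval is a global one. -/
theorem maxSet_nonempty (hf : ContDiff ℝ 2 f) (hconv : ∀ u, 0 ≤ deriv (deriv f) u)
    (hmono : StrictMono (deriv f)) (hφ : Measurable φ) (hM : ∀ x, |φ x| ≤ M) (ht : 0 < t) :
    (maxSet f φ x t).Nonempty := by
  have hM₀ : -M ≤ M := neg_le_self ((abs_nonneg _).trans (hM 0))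
  obtain ⟨w, -, hw⟩ := isCompact_Icc.exists_isMaxOn (nonempty_Icc.2 hM₀)
    (continuous_eFun hf hconv hφ hM ht.le (x := x)).continuousOn
  refine ⟨w, fun v ↦ ?_⟩
  rcases lt_or_ge v (-M) with hlow | hvlow
  · exact (eFun_lt_eFun_of_lt_neg hf hconv hmono hφ hM ht hlow).le.trans
      (hw (left_mem_Icc.2 hM₀))
  rcases le_or_gt v M with hvup | hup
  · exact hw ⟨hvlow, hvup⟩
  · exact (eFun_lt_eFun_of_lt hf hconv hmono hφ hM ht hup).le.trans (hw (right_mem_Icc.2 hM₀))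

/-- Optimality of `w₁` at `x₁` and of `w₂` at `x₂` is tested against the competitors `v`, `w'`
that exchange the characteristic feet `x - t f'(w)`; the two tests add up to a violation of
`legendreAt_add_lt`. -/
theorem sub_mul_deriv_le_of_mem_maxSet (hf : ContDiff ℝ 2 f)
    (hconv : ∀ u, 0 ≤ deriv (deriv f) u) (hmono : StrictMono (deriv f)) (hφ : Measurable φ)
    (hM : ∀ x, |φ x| ≤ M) (ht : 0 < t) {x₁ x₂ w₁ w₂ : ℝ} (hx : x₁ < x₂)
    (hw₁ : w₁ ∈ maxSet f φ x₁ t) (hw₂ : w₂ ∈ maxSet f φ x₂ t) :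
    x₁ - t * deriv f w₁ ≤ x₂ - t * deriv f w₂ := by
  by_contra! hcross
  set δ := (x₂ - x₁) / t
  have htδ : t * δ = x₂ - x₁ := mul_div_cancel₀ _ ht.ne'
  have hδ : 0 < δ := div_pos (sub_pos.2 hx) ht
  have hgap : deriv f w₁ + δ < deriv f w₂ := lt_of_mul_lt_mul_left (by linarith) ht.le
  have hw : w₁ ≤ w₂ := (hmono.lt_iff_lt.1 (by linarith)).le
  have hivt := intermediate_value_Icc hw (hf.continuous_deriv one_le_two).continuousOn
  obtain ⟨v, -, hv⟩ := hivt (show deriv f w₂ - δ ∈ _ from ⟨by linarith, by linarith⟩)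
  obtain ⟨w', -, hw'⟩ := hivt (show deriv f w₁ + δ ∈ _ from ⟨by linarith, by linarith⟩)
  have hfeet₁ : x₁ - t * deriv f v = x₂ - t * deriv f w₂ := by rw [hv]; linear_combination htδ
  have hfeet₂ : x₂ - t * deriv f w' = x₁ - t * deriv f w₁ := by rw [hw']; linear_combination -htδ
  have hopt₁ := eFun_sub_eFun hf hconv hφ hM ht.le w₁ v (x := x₁)
  have hopt₂ := eFun_sub_eFun hf hconv hφ hM ht.le w' w₂ (x := x₂)
  rw [hfeet₁] at hopt₁
  rw [hfeet₂] at hopt₂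
  have hsum : legendreAt f w₁ + legendreAt f w₂ ≤ legendreAt f v + legendreAt f w' := by
    refine le_of_mul_le_mul_left ?_ ht
    linarith [hw₁ v, hw₂ w']
  refine hsum.not_gt (legendreAt_add_lt (hf.differentiable two_ne_zero) hmono ?_ ?_ ?_ ?_
    (by linarith))
  all_goals rw [← hmono.lt_iff_lt]; linarith

end MaxSet

/-- at each fixed time the jump set is countable and `f'(u⁺(·,t))` has
locally bounded variation. -/
theorem stmt3_regularity_fixed_time
    (f φ : ℝ → ℝ) (M : ℝ)
    (hf : ContDiff ℝ 2 f)
    (hconv : ∀ u : ℝ, 0 ≤ deriv (deriv f) u)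
    (hdeg : volume {u : ℝ | deriv (deriv f) u = 0} = 0)
    (hφmeas : Measurable φ)
    (hφbdd : ∀ x : ℝ, |φ x| ≤ M) :
    ∀ t : ℝ, 0 < t →
      (∀ x : ℝ, uPlus f φ x t ≤ uMinus f φ x t) ∧
      Set.Countable {x : ℝ | uPlus f φ x t < uMinus f φ x t} ∧
      LocallyBoundedVariationOn (fun x : ℝ => deriv f (uPlus f φ x t)) Set.univ := by
  intro t ht
  have hmono : StrictMono (deriv f) := strictMono_of_deriv_nonneg_of_volume_zero
    (hf.deriv'.differentiable one_ne_zero) hconv hdeg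
  have hcpt x := isCompact_maxSet hf hconv hmono hφmeas hφbdd ht (x := x)
  have hne x := maxSet_nonempty hf hconv hmono hφmeas hφbdd ht (x := x)
  have hplus x : uPlus f φ x t ∈ maxSet f φ x t := (hcpt x).sInf_mem (hne x)
  have hminus x : uMinus f φ x t ∈ maxSet f φ x t := (hcpt x).sSup_mem (hne x)
  have hfeet {x₁ x₂ w₁ w₂ : ℝ} (hx : x₁ < x₂) (hw₁ : w₁ ∈ maxSet f φ x₁ t)
      (hw₂ : w₂ ∈ maxSet f φ x₂ t) : x₁ - t * deriv f w₁ ≤ x₂ - t * deriv f w₂ :=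
    sub_mul_deriv_le_of_mem_maxSet hf hconv hmono hφmeas hφbdd ht hx hw₁ hw₂
  refine ⟨fun x ↦ csInf_le_csSup (hne x) (hcpt x).bddBelow (hcpt x).bddAbove, ?_,
    locallyBoundedVariationOn_of_monotone_sub_mul ht
      (monotone_iff_forall_lt.2 fun x₁ x₂ hx ↦ hfeet hx (hplus x₁) (hplus x₂))⟩
  have hjumps := countable_setOf_lt_of_forall_lt_le
    (a := fun x ↦ x - t * deriv f (uMinus f φ x t)) (b := fun x ↦ x - t * deriv f (uPlus f φ x t))
    fun x₁ x₂ hx ↦ hfeet hx (hplus x₁) (hminus x₂)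
  convert hjumps using 3 with x
  rw [sub_lt_sub_iff_left, mul_lt_mul_iff_right₀ ht, hmono.lt_iff_lt]
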